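/- Let f be twice continuously differentiable and g(U,V) = f(UVᵀ) + (λ/2)(‖U‖_F² + ‖V‖_F²). Then the Hessian quadratic form of g at W = [Uᵀ Vᵀ]ᵀ in direction D = [D_Uᵀ D_Vᵀ]ᵀ is [∇²g(W)](D,D) = ⟨Ξ(X), DDᵀ⟩ + [∇²f(X)](D_U Vᵀ + U D_Vᵀ, D_U Vᵀ + U D_Vᵀ), where X = UVᵀ and Ξ(X) = [[λI, ∇f(X)],[∇f(X)ᵀ, λI]]. -/

import Mathlib

open Matrix

noncomputable def singularValues {m n : Type*} [Fintype m] [Fintype n] [DecidableEq n]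
    (X : Matrix m n ℝ) : n → ℝ :=
  fun i => Real.sqrt ((show (Xᵀ * X).IsHermitian from Matrix.isHermitian_conjTranspose_mul_self X).eigenvalues i)

noncomputable def nuclearNorm {m n : Type*} [Fintype m] [Fintype n] [DecidableEq n]
    (X : Matrix m n ℝ) : ℝ := ∑ i, singularValues X i

noncomputable def frobNorm {m n : Type*} [Fintype m] [Fintype n] (X : Matrix m n ℝ) : ℝ :=
  Real.sqrt ((Xᵀ * X).trace)

noncomputable def matSpectralNorm {m n : Type*} [Fintype m] [Fintype n] [DecidableEq m] [DecidableEq n]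
    (X : Matrix m n ℝ) : ℝ :=
  ‖LinearMap.toContinuousLinearMap (Matrix.toEuclideanLin X)‖

noncomputable def smallestNonzeroSV {m n : Type*} [Fintype m] [Fintype n] [DecidableEq n]
    (X : Matrix m n ℝ) : ℝ :=
  sInf {s | (∃ i, singularValues X i = s) ∧ s ≠ 0}

noncomputable def distO {n r : ℕ} (W₁ W₂ : Matrix (Fin n) (Fin r) ℝ) : ℝ :=
  sInf {d | ∃ R : Matrix (Fin r) (Fin r) ℝ, Rᵀ * R = 1 ∧ d = frobNorm (W₁ - W₂ * R)}

attribute [local instance] Matrix.normedAddCommGroup Matrix.normedSpace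

/-!
Write `g = f ∘ q + (λ/2) ‖·‖²` with `q W = B W W` for the bilinear map `B W D = W.1 * D.2ᵀ`.
Differentiating `y ↦ f (B y y)` twice gives
`D²(f ∘ q)(W)(D, D) = Df(q W)(2 B D D) + D²f(q W)(B D W + B W D, B D W + B W D)`,
where `B D W + B W D = D_U Vᵀ + U D_Vᵀ`, and the regulariser contributes `λ ‖D‖²`.
Expanding `⟨Ξ(X), D Dᵀ⟩` blockwise gives `λ ‖D_U‖² + λ ‖D_V‖² + 2 ⟨∇f(X), D_U D_Vᵀ⟩`,
which is exactly `λ ‖D‖² + Df(X)(2 D_U D_Vᵀ)`.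
-/

namespace ContinuousLinearMap

variable {𝕜 E F G : Type*} [NontriviallyNormedField 𝕜] [NormedAddCommGroup E] [NormedSpace 𝕜 E]
  [NormedAddCommGroup F] [NormedSpace 𝕜 F] [NormedAddCommGroup G] [NormedSpace 𝕜 G]
  (B : E →L[𝕜] E →L[𝕜] F)

theorem hasFDerivAt_apply_self (x : E) : HasFDerivAt (fun y => B y y) ((B.flip + B) x) x := by
  refine (B.hasFDerivAt_of_bilinear (hasFDerivAt_id x) (hasFDerivAt_id x)).congr_fderiv ?_
  ext h
  simp [add_comm]

theorem fderiv_apply_self : fderiv 𝕜 (fun y => B y y) = ⇑(B.flip + B) :=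
  funext fun x => (B.hasFDerivAt_apply_self x).fderiv

theorem iteratedFDeriv_two_apply_self (x h k : E) :
    iteratedFDeriv 𝕜 2 (fun y => B y y) x ![h, k] = B k h + B h k := by
  rw [iteratedFDeriv_two_apply, B.fderiv_apply_self, (B.flip + B).fderiv]
  simp

theorem iteratedFDeriv_two_comp_apply_self {f : F → G} (hf : ContDiff 𝕜 2 f) (x h k : E) :
    iteratedFDeriv 𝕜 2 (fun y => f (B y y)) x ![h, k]
      = fderiv 𝕜 f (B x x) (B k h + B h k)
        + iteratedFDeriv 𝕜 2 f (B x x) ![B h x + B x h, B k x + B x k] := by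
  have hf' : Differentiable 𝕜 (fderiv 𝕜 f) :=
    (hf.fderiv_right (m := 1) le_rfl).differentiable one_ne_zero
  have hfirst :
      fderiv 𝕜 (fun y => f (B y y)) = fun y => (fderiv 𝕜 f (B y y)).comp ((B.flip + B) y) :=
    funext fun y => ((hf.differentiable two_ne_zero (B y y)).hasFDerivAt.comp
      (f := fun y => B y y) y (B.hasFDerivAt_apply_self y)).fderiv
  have hsecond := (((hf' (B x x)).hasFDerivAt.comp (f := fun y => B y y) x
    (B.hasFDerivAt_apply_self x)).clm_comp (B.flip + B).hasFDerivAt).fderiv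
  simp only [Function.comp_apply] at hsecond
  rw [iteratedFDeriv_two_apply, hfirst, hsecond, iteratedFDeriv_two_apply]
  simp [add_comm]

end ContinuousLinearMap

namespace Matrix

variable {m n o R : Type*} [Fintype m] [Fintype n] [Fintype o]

theorem trace_fromBlocks [AddCommMonoid R] (A : Matrix m m R) (B : Matrix m n R)
    (C : Matrix n m R) (D : Matrix n n R) : (fromBlocks A B C D).trace = A.trace + D.trace := by
  simp [trace, Fintype.sum_sum_type]

theorem trace_transpose_fromBlocks_mul_fromRows_mul_transpose [CommSemiring R]
    (A : Matrix m m R) (B : Matrix m n R) (C : Matrix n m R) (D : Matrix n n R)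
    (P : Matrix m o R) (Q : Matrix n o R) :
    ((fromBlocks A B C D)ᵀ * (fromRows P Q * (fromRows P Q)ᵀ)).trace
      = (Aᵀ * (P * Pᵀ)).trace + (Bᵀ * (P * Qᵀ)).trace + (Cᵀ * (Q * Pᵀ)).trace
        + (Dᵀ * (Q * Qᵀ)).trace := by
  rw [transpose_fromRows, fromRows_mul_fromCols, fromBlocks_transpose, fromBlocks_multiply,
    trace_fromBlocks, trace_add, trace_add]
  ring

theorem sq_frobNorm (X : Matrix m n ℝ) : frobNorm X ^ 2 = (Xᵀ * X).trace :=
  Real.sq_sqrt (posSemidef_conjTranspose_mul_self X).trace_nonneg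

end Matrix

noncomputable def LinearMap.toContinuousLinearMap₂ {𝕜 E F G : Type*} [NontriviallyNormedField 𝕜]
    [CompleteSpace 𝕜] [NormedAddCommGroup E] [NormedSpace 𝕜 E] [NormedAddCommGroup F]
    [NormedSpace 𝕜 F] [NormedAddCommGroup G] [NormedSpace 𝕜 G] [FiniteDimensional 𝕜 E]
    [FiniteDimensional 𝕜 F] (B : E →ₗ[𝕜] F →ₗ[𝕜] G) : E →L[𝕜] F →L[𝕜] G :=
  LinearMap.toContinuousLinearMap (LinearMap.toContinuousLinearMap.toLinearMap ∘ₗ B)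

section Factorization

-- Matrices carry the product topology `instTopologicalSpaceMatrix` and the one induced by the
-- local norm instance; they agree only up to unfolding. Dropping the former here gives these maps
-- the types the generic calculus lemmas expect.
attribute [-instance] instTopologicalSpaceMatrix Matrix.instUniformSpace

variable {m n r : Type*} [Fintype m] [Fintype n] [Fintype r]

noncomputable def mulTransposeCLM :
    (Matrix m r ℝ × Matrix n r ℝ) →L[ℝ] (Matrix m r ℝ × Matrix n r ℝ) →L[ℝ] Matrix m n ℝ :=
  LinearMap.toContinuousLinearMap₂ <| LinearMap.mk₂ ℝ (fun W D => W.1 * D.2ᵀ)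
    (fun _ _ _ => by simp [Matrix.add_mul]) (fun _ _ _ => by simp)
    (fun _ _ _ => by simp [Matrix.mul_add]) (fun _ _ _ => by simp)

@[simp] theorem mulTransposeCLM_apply (W D : Matrix m r ℝ × Matrix n r ℝ) :
    mulTransposeCLM W D = W.1 * D.2ᵀ := rfl

noncomputable def frobeniusPairing :
    (Matrix m r ℝ × Matrix n r ℝ) →L[ℝ] (Matrix m r ℝ × Matrix n r ℝ) →L[ℝ] ℝ :=
  LinearMap.toContinuousLinearMap₂ <| LinearMap.mk₂ ℝ
    (fun W D => (W.1ᵀ * D.1).trace + (W.2ᵀ * D.2).trace)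
    (fun _ _ _ => by simp [Matrix.add_mul]; ring) (fun _ _ _ => by simp [mul_add])
    (fun _ _ _ => by simp [Matrix.mul_add]; ring) (fun _ _ _ => by simp [mul_add])

@[simp] theorem frobeniusPairing_apply (W D : Matrix m r ℝ × Matrix n r ℝ) :
    frobeniusPairing W D = (W.1ᵀ * D.1).trace + (W.2ᵀ * D.2).trace := rfl

end Factorization

section

variable {m n r : Type*} [Fintype m] [Fintype n] [Fintype r]

theorem contDiff_mul_transpose {k : WithTop ℕ∞} :
    ContDiff ℝ k fun W : Matrix m r ℝ × Matrix n r ℝ => W.1 * W.2ᵀ :=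
  (mulTransposeCLM (m := m) (n := n) (r := r)).contDiff.clm_apply contDiff_id

theorem iteratedFDeriv_two_comp_mul_transpose {G : Type*} [NormedAddCommGroup G]
    [NormedSpace ℝ G] {f : Matrix m n ℝ → G} (hf : ContDiff ℝ 2 f)
    (W D : Matrix m r ℝ × Matrix n r ℝ) :
    iteratedFDeriv ℝ 2 (fun W : Matrix m r ℝ × Matrix n r ℝ => f (W.1 * W.2ᵀ)) W ![D, D]
      = fderiv ℝ f (W.1 * W.2ᵀ) (D.1 * D.2ᵀ + D.1 * D.2ᵀ)
        + iteratedFDeriv ℝ 2 f (W.1 * W.2ᵀ)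
          ![D.1 * W.2ᵀ + W.1 * D.2ᵀ, D.1 * W.2ᵀ + W.1 * D.2ᵀ] := by
  have h := mulTransposeCLM.iteratedFDeriv_two_comp_apply_self hf W D D
  simp only [mulTransposeCLM_apply] at h
  -- `h` and the goal differ only in which of the two topologies on matrices they mention
  exact h

theorem sq_frobNorm_add_sq_frobNorm (W : Matrix m r ℝ × Matrix n r ℝ) :
    frobNorm W.1 ^ 2 + frobNorm W.2 ^ 2 = frobeniusPairing W W := by
  simp [Matrix.sq_frobNorm]

theorem contDiff_sq_frobNorm_add_sq_frobNorm {k : WithTop ℕ∞} :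
    ContDiff ℝ k fun W : Matrix m r ℝ × Matrix n r ℝ => frobNorm W.1 ^ 2 + frobNorm W.2 ^ 2 := by
  simp only [sq_frobNorm_add_sq_frobNorm]
  exact (frobeniusPairing (m := m) (n := n) (r := r)).contDiff.clm_apply contDiff_id

theorem iteratedFDeriv_two_const_mul_sq_frobNorm_add_sq_frobNorm (c : ℝ)
    (W D : Matrix m r ℝ × Matrix n r ℝ) :
    iteratedFDeriv ℝ 2 (fun W : Matrix m r ℝ × Matrix n r ℝ =>
      c * (frobNorm W.1 ^ 2 + frobNorm W.2 ^ 2)) W ![D, D]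
        = 2 * c * (frobNorm D.1 ^ 2 + frobNorm D.2 ^ 2) := by
  have h := (c • frobeniusPairing).iteratedFDeriv_two_apply_self W D D
  simp only [_root_.smul_apply, smul_eq_mul, ← sq_frobNorm_add_sq_frobNorm] at h
  rw [h]
  ring

end

theorem stmt16_general {p q r : ℕ} (f : Matrix (Fin p) (Fin q) ℝ → ℝ)
    (hf : ContDiff ℝ 2 f) (l : ℝ)
    (gradf : Matrix (Fin p) (Fin q) ℝ → Matrix (Fin p) (Fin q) ℝ)
    (hgrad : ∀ X D, fderiv ℝ f X D = ((gradf X)ᵀ * D).trace)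
    (U DU : Matrix (Fin p) (Fin r) ℝ) (V DV : Matrix (Fin q) (Fin r) ℝ) :
    iteratedFDeriv ℝ 2 (fun W : Matrix (Fin p) (Fin r) ℝ × Matrix (Fin q) (Fin r) ℝ =>
        f (W.1 * W.2ᵀ) + l / 2 * (frobNorm W.1 ^ 2 + frobNorm W.2 ^ 2)) (U, V)
        ![(DU, DV), (DU, DV)]
      = ((fromBlocks (l • (1 : Matrix (Fin p) (Fin p) ℝ)) (gradf (U * Vᵀ))
            (gradf (U * Vᵀ))ᵀ (l • (1 : Matrix (Fin q) (Fin q) ℝ)))ᵀ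
          * (fromRows DU DV * (fromRows DU DV)ᵀ)).trace
        + iteratedFDeriv ℝ 2 f (U * Vᵀ) ![DU * Vᵀ + U * DVᵀ, DU * Vᵀ + U * DVᵀ] := by
  rw [fun_iteratedFDeriv_add_apply (f := fun W => f (W.1 * W.2ᵀ))
      (hf.comp contDiff_mul_transpose).contDiffAt
      (contDiff_const.mul contDiff_sq_frobNorm_add_sq_frobNorm).contDiffAt,
    _root_.add_apply, iteratedFDeriv_two_comp_mul_transpose hf,
    iteratedFDeriv_two_const_mul_sq_frobNorm_add_sq_frobNorm, hgrad,
    trace_transpose_fromBlocks_mul_fromRows_mul_transpose, Matrix.sq_frobNorm, Matrix.sq_frobNorm]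
  simp only [transpose_smul, transpose_one, transpose_transpose, smul_mul, one_mul, trace_smul,
    smul_eq_mul]
  have hcross : (gradf (U * Vᵀ) * (DV * DUᵀ)).trace = ((gradf (U * Vᵀ))ᵀ * (DU * DVᵀ)).trace := by
    rw [← trace_transpose_mul, transpose_mul, transpose_transpose]
  rw [hcross, trace_mul_comm DUᵀ, trace_mul_comm DVᵀ, Matrix.mul_add, trace_add]
  ring

theorem stmt16 {p q r : ℕ} (f : Matrix (Fin p) (Fin q) ℝ → ℝ)
    (hf : ContDiff ℝ 2 f) (l : ℝ) (hl : 0 < l)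
    (gradf : Matrix (Fin p) (Fin q) ℝ → Matrix (Fin p) (Fin q) ℝ)
    (hgrad : ∀ X D, fderiv ℝ f X D = ((gradf X)ᵀ * D).trace)
    (U DU : Matrix (Fin p) (Fin r) ℝ) (V DV : Matrix (Fin q) (Fin r) ℝ) :
    iteratedFDeriv ℝ 2 (fun W : Matrix (Fin p) (Fin r) ℝ × Matrix (Fin q) (Fin r) ℝ =>
        f (W.1 * W.2ᵀ) + l / 2 * (frobNorm W.1 ^ 2 + frobNorm W.2 ^ 2)) (U, V)
        ![(DU, DV), (DU, DV)]
      = ((fromBlocks (l • (1 : Matrix (Fin p) (Fin p) ℝ)) (gradf (U * Vᵀ))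
            (gradf (U * Vᵀ))ᵀ (l • (1 : Matrix (Fin q) (Fin q) ℝ)))ᵀ
          * (fromRows DU DV * (fromRows DU DV)ᵀ)).trace
        + iteratedFDeriv ℝ 2 f (U * Vᵀ) ![DU * Vᵀ + U * DVᵀ, DU * Vᵀ + U * DVᵀ] :=
  stmt16_general f hf l gradf hgrad U DU V DV
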